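/- Let P be an n×n correlation with strictly positive entries, let 0 ≤ λ < 1, and suppose a density matrix σ on ℂ^d ⊗ ℂ^d together with POVMs {E_x}_{x=1}^n, {F_y}_{y=1}^n on ℂ^d generates P under depolarizing noise of strength λ. Set s_x = tr(E_x)/d and t_y = tr(F_y)/d. Then d ≥ (1/(1−λ))·( max_{x,y}{ (∑_{b=1}^n P(x,b))/s_x , (∑_{a=1}^n P(a,y))/t_y } − λ ). -/

import Mathlib

open Matrix BigOperators Finset
open scoped Kronecker ComplexOrder

noncomputable section

/-- The effect of the depolarizing channel on a measurement effect (Heisenberg picture). -/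
def noisyEffect {d : ℕ} (lam : ℝ) (E : Matrix (Fin d) (Fin d) ℂ) : Matrix (Fin d) (Fin d) ℂ :=
  ((1 - lam : ℝ) : ℂ) • E + ((lam : ℂ) * E.trace / (d : ℂ)) • (1 : Matrix (Fin d) (Fin d) ℂ)

/-- A POVM on ℂ^d with n outcomes. -/
def IsPOVM {d n : ℕ} (E : Fin n → Matrix (Fin d) (Fin d) ℂ) : Prop :=
  (∀ x, (E x).PosSemidef) ∧ ∑ x, E x = 1

/-- P is generated with local dimension d under depolarizing noise of strength lam. -/
def GeneratesWithNoise {n : ℕ} (P : Matrix (Fin n) (Fin n) ℝ) (lam : ℝ) (d : ℕ) : Prop :=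
  ∃ (σ : Matrix (Fin d × Fin d) (Fin d × Fin d) ℂ)
    (E F : Fin n → Matrix (Fin d) (Fin d) ℂ),
    σ.PosSemidef ∧ σ.trace = 1 ∧ IsPOVM E ∧ IsPOVM F ∧
    ∀ x y, (P x y : ℂ) =
      ((noisyEffect lam (E x) ⊗ₖ noisyEffect lam (F y)) * σ).trace

/-- The matrix P̂_λ^{s,t}. -/
def Phat {n : ℕ} (P : Matrix (Fin n) (Fin n) ℝ) (lam : ℝ) (s t : Fin n → ℝ)
    (x y : Fin n) : ℝ :=
  P x y - lam * s x * (∑ a, P a y) - lam * t y * (∑ b, P x b) + lam ^ 2 * s x * t y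

/-- Nonnegative rank. -/
def NonnegRank {m n : ℕ} (P : Matrix (Fin m) (Fin n) ℝ) : ℕ :=
  sInf {r : ℕ | ∃ (u : Fin r → Fin m → ℝ) (v : Fin r → Fin n → ℝ),
    (∀ i x, 0 ≤ u i x) ∧ (∀ i y, 0 ≤ v i y) ∧ ∀ x y, P x y = ∑ i, u i x * v i y}

/-- PSD rank. -/
def PsdRank {m n : ℕ} (M : Matrix (Fin m) (Fin n) ℝ) : ℕ :=
  sInf {r : ℕ | ∃ (C : Fin m → Matrix (Fin r) (Fin r) ℂ)
    (D : Fin n → Matrix (Fin r) (Fin r) ℂ),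
    (∀ x, (C x).PosSemidef) ∧ (∀ y, (D y).PosSemidef) ∧
    ∀ x y, (M x y : ℂ) = (C x * D y).trace}

def outerProj {α : Type*} [Fintype α] (ψ : α → ℂ) : Matrix α α ℂ :=
  Matrix.of fun i j => ψ i * (starRingEnd ℂ) (ψ j)

def qval (k : ℝ) : ℝ := 1 / (1 - k) - Real.sqrt (1 / (1 - k) ^ 2 - 1)

def Bmat (m : ℕ) (k : ℝ) : Matrix (Fin m) (Fin m) ℝ :=
  Matrix.of fun x y =>
    (1 / (m : ℝ) ^ 2) * (1 - k * Real.cos (2 * Real.pi * ((x.val : ℝ) + (y.val : ℝ)) / m))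

def Amat (m : ℕ) (k : ℝ) : Matrix (Fin (m + 1)) (Fin (m + 1)) ℝ :=
  Matrix.of fun x y =>
    if x.val = 0 then
      (if y.val = 0 then (1 - qval k) ^ 2 / 2 else qval k * (1 - qval k) / (2 * m))
    else if y.val = 0 then qval k * (1 - qval k) / (2 * m)
    else ((1 + (qval k) ^ 2) / 2) *
      ((1 / (m : ℝ) ^ 2) *
        (1 - k * Real.cos (2 * Real.pi * (((x.val : ℝ) - 1) + ((y.val : ℝ) - 1)) / m)))

def IsElPsdFactorization {n : ℕ} (P : Matrix (Fin n) (Fin n) ℝ) (lam : ℝ) (r : ℕ)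
    (C D : Fin n → Matrix (Fin r) (Fin r) ℂ) : Prop :=
  (∀ x, (C x).PosSemidef) ∧ (∀ y, (D y).PosSemidef) ∧
  (∀ x y, (P x y : ℂ) = (C x * D y).trace) ∧
  IsUnit (∑ k, C k) ∧ IsUnit (∑ k, D k) ∧
  (∀ x, (C x - (((lam : ℂ) / r) * (C x * (∑ k, C k)⁻¹).trace) • (∑ k, C k)).PosSemidef) ∧
  (∀ y, (D y - (((lam : ℂ) / r) * (D y * (∑ k, D k)⁻¹).trace) • (∑ k, D k)).PosSemidef)

/-!
Summing the correlation over one party's outcomes removes that party: the noisy effects of a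
POVM still sum to the identity, so `∑_b P(x,b) = tr((𝔈_λ(E_x) ⊗ I) σ)`. Since `E_x ≤ tr(E_x) I`,
the noisy effect is bounded by `((1-λ) + λ/d) tr(E_x) I = ((1-λ) d + λ) s_x I`, and a density
matrix sees at most that scalar. Hence `∑_b P(x,b) / s_x ≤ (1-λ) d + λ`, and likewise for the
columns.
-/

open scoped MatrixOrder

namespace Matrix

section Kronecker

variable {R l m n p : Type*}

theorem sub_kronecker [Ring R] (A₁ A₂ : Matrix l m R) (B : Matrix n p R) :
    (A₁ - A₂) ⊗ₖ B = A₁ ⊗ₖ B - A₂ ⊗ₖ B := by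
  ext
  simp [sub_mul]

theorem kronecker_sub [Ring R] (A : Matrix l m R) (B₁ B₂ : Matrix n p R) :
    A ⊗ₖ (B₁ - B₂) = A ⊗ₖ B₁ - A ⊗ₖ B₂ := by
  ext
  simp [mul_sub]

theorem kronecker_sum {ι : Type*} [NonUnitalNonAssocSemiring R] (A : Matrix l m R)
    (s : Finset ι) (B : ι → Matrix n p R) :
    A ⊗ₖ (∑ i ∈ s, B i) = ∑ i ∈ s, A ⊗ₖ B i := by
  ext
  simp [sum_apply, Finset.mul_sum]

theorem sum_kronecker {ι : Type*} [NonUnitalNonAssocSemiring R] (s : Finset ι)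
    (A : ι → Matrix l m R) (B : Matrix n p R) :
    (∑ i ∈ s, A i) ⊗ₖ B = ∑ i ∈ s, A i ⊗ₖ B := by
  ext
  simp [sum_apply, Finset.sum_mul]

end Kronecker

variable {𝕜 : Type*} [RCLike 𝕜] {n : Type*} [Fintype n]

theorem PosSemidef.trace_mul_nonneg [DecidableEq n] {A B : Matrix n n 𝕜} (hA : A.PosSemidef)
    (hB : B.PosSemidef) : 0 ≤ (A * B).trace := by
  obtain ⟨Y, rfl⟩ := CStarAlgebra.nonneg_iff_eq_star_mul_self.mp hB.nonneg
  rw [star_eq_conjTranspose, ← Matrix.mul_assoc, trace_mul_comm, ← Matrix.mul_assoc]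
  exact (hA.mul_mul_conjTranspose_same Y).trace_nonneg

theorem PosSemidef.le_trace_smul_one [DecidableEq n] {A : Matrix n n ℂ} (hA : A.PosSemidef) :
    A ≤ A.trace • 1 := by
  have h : A ≤ algebraMap ℝ (Matrix n n ℂ) (∑ i, hA.1.eigenvalues i) := by
    refine le_algebraMap_of_spectrum_le (fun r hr => ?_) hA.1.isSelfAdjoint
    obtain ⟨i, rfl⟩ := hA.1.spectrum_real_eq_range_eigenvalues ▸ hr
    exact Finset.single_le_sum (fun j _ => hA.eigenvalues_nonneg j) (Finset.mem_univ i)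
  rwa [Algebra.algebraMap_eq_smul_one, RCLike.real_smul_eq_coe_smul (K := ℂ), RCLike.ofReal_sum,
    ← hA.1.trace_eq_sum_eigenvalues] at h

theorem trace_mul_le_of_le_smul_one [DecidableEq n] {σ M : Matrix n n 𝕜} {c : 𝕜}
    (hσ : σ.PosSemidef) (hσ1 : σ.trace = 1) (hM : M ≤ c • 1) : (M * σ).trace ≤ c := by
  have h := (le_iff.1 hM).trace_mul_nonneg hσ
  rwa [sub_mul, trace_sub, smul_mul, Matrix.one_mul, trace_smul, hσ1, smul_eq_mul, mul_one,
    sub_nonneg] at h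

variable {m : Type*} [Fintype m] [DecidableEq n] [DecidableEq m] {c : 𝕜}

theorem kronecker_one_le_smul_one {A : Matrix n n 𝕜} (h : A ≤ c • 1) :
    A ⊗ₖ (1 : Matrix m m 𝕜) ≤ c • 1 := by
  rw [le_iff, ← one_kronecker_one, ← smul_kronecker, ← sub_kronecker]
  exact (le_iff.1 h).kronecker PosSemidef.one

theorem one_kronecker_le_smul_one {B : Matrix m m 𝕜} (h : B ≤ c • 1) :
    (1 : Matrix n n 𝕜) ⊗ₖ B ≤ c • 1 := by
  rw [le_iff, ← one_kronecker_one, ← kronecker_smul, ← kronecker_sub]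
  exact PosSemidef.one.kronecker (le_iff.1 h)

end Matrix

section noisyEffect

variable {d : ℕ}

theorem sum_noisyEffect {ι : Type*} [Fintype ι] (hd : d ≠ 0) (lam : ℝ)
    {E : ι → Matrix (Fin d) (Fin d) ℂ} (hE : ∑ i, E i = 1) :
    ∑ i, noisyEffect lam (E i) = 1 := by
  simp only [noisyEffect, sum_add_distrib, ← smul_sum, ← sum_smul, hE, ← sum_div, ← mul_sum,
    ← trace_sum, trace_one, Fintype.card_fin]
  rw [← add_smul, mul_div_cancel_right₀ _ (Nat.cast_ne_zero.2 hd)]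
  push_cast
  simp

theorem noisyEffect_le_smul_one (hd : d ≠ 0) {lam : ℝ} (hlam : lam ≤ 1)
    {E : Matrix (Fin d) (Fin d) ℂ} (hE : E.PosSemidef) :
    noisyEffect lam E ≤ ((((1 - lam) * d + lam) * (E.trace.re / d) : ℝ) : ℂ) • 1 := by
  have htrace : ((E.trace.re : ℝ) : ℂ) = E.trace :=
    Complex.ext rfl (Complex.nonneg_iff.1 hE.trace_nonneg).2
  have hscaled : ((1 - lam : ℝ) : ℂ) • E ≤ ((1 - lam : ℝ) : ℂ) • (E.trace • 1) := by
    rw [Matrix.le_iff, ← smul_sub]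
    exact (Matrix.le_iff.1 hE.le_trace_smul_one).smul (by exact_mod_cast sub_nonneg.2 hlam)
  calc noisyEffect lam E
      ≤ ((1 - lam : ℝ) : ℂ) • (E.trace • 1) + ((lam : ℂ) * E.trace / d) • 1 := by
        rw [noisyEffect]
        exact add_le_add_left hscaled _
    _ = _ := by
        rw [smul_smul, ← add_smul, ← htrace]
        congr 1
        push_cast
        rw [Complex.ofReal_re]
        field_simp

end noisyEffect

section marginals

variable {n d : ℕ} {P : Matrix (Fin n) (Fin n) ℝ} {lam : ℝ}
  {σ : Matrix (Fin d × Fin d) (Fin d × Fin d) ℂ} {E F : Fin n → Matrix (Fin d) (Fin d) ℂ}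

theorem row_sum_le_of_generates (hd : d ≠ 0) (hlam : lam ≤ 1) (hσ : σ.PosSemidef) (hσ1 : σ.trace = 1)
    {x : Fin n} (hEx : (E x).PosSemidef) (hF : ∑ y, F y = 1)
    (hgen : ∀ x y, (P x y : ℂ) =
      ((noisyEffect lam (E x) ⊗ₖ noisyEffect lam (F y)) * σ).trace) :
    ∑ b, P x b ≤ ((1 - lam) * d + lam) * ((E x).trace.re / d) := by
  have hmarginal : ((∑ b, P x b : ℝ) : ℂ) = ((noisyEffect lam (E x) ⊗ₖ 1) * σ).trace := by
    rw [← sum_noisyEffect hd lam hF, kronecker_sum, sum_mul, trace_sum]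
    push_cast
    exact sum_congr rfl fun b _ => hgen x b
  have h := trace_mul_le_of_le_smul_one hσ hσ1
    (kronecker_one_le_smul_one (m := Fin d) (noisyEffect_le_smul_one hd hlam hEx))
  rw [← hmarginal] at h
  exact_mod_cast h

theorem col_sum_le_of_generates (hd : d ≠ 0) (hlam : lam ≤ 1) (hσ : σ.PosSemidef) (hσ1 : σ.trace = 1)
    {y : Fin n} (hFy : (F y).PosSemidef) (hE : ∑ x, E x = 1)
    (hgen : ∀ x y, (P x y : ℂ) =
      ((noisyEffect lam (E x) ⊗ₖ noisyEffect lam (F y)) * σ).trace) :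
    ∑ a, P a y ≤ ((1 - lam) * d + lam) * ((F y).trace.re / d) := by
  have hmarginal : ((∑ a, P a y : ℝ) : ℂ) = ((1 ⊗ₖ noisyEffect lam (F y)) * σ).trace := by
    rw [← sum_noisyEffect hd lam hE, sum_kronecker, sum_mul, trace_sum]
    push_cast
    exact sum_congr rfl fun a _ => hgen a y
  have h := trace_mul_le_of_le_smul_one hσ hσ1
    (one_kronecker_le_smul_one (n := Fin d) (noisyEffect_le_smul_one hd hlam hFy))
  rw [← hmarginal] at h
  exact_mod_cast h

end marginals

theorem dimension_lower_bound_of_generates_general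
    {n d : ℕ} (P : Matrix (Fin n) (Fin n) ℝ)
    (lam : ℝ) (hlam1 : lam < 1)
    (σ : Matrix (Fin d × Fin d) (Fin d × Fin d) ℂ)
    (E F : Fin n → Matrix (Fin d) (Fin d) ℂ)
    (hσ : σ.PosSemidef) (hσ1 : σ.trace = 1) (hE : IsPOVM E) (hF : IsPOVM F)
    (hgen : ∀ x y, (P x y : ℂ) =
      ((noisyEffect lam (E x) ⊗ₖ noisyEffect lam (F y)) * σ).trace) :
    ∀ x y : Fin n,
      (1 / (1 - lam)) *
        (max ((∑ b, P x b) / ((E x).trace.re / d))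
             ((∑ a, P a y) / ((F y).trace.re / d)) - lam) ≤ (d : ℝ) := by
  intro x y
  have hd : d ≠ 0 := by
    rintro rfl
    simp [Matrix.trace] at hσ1
  have hscale : 0 ≤ (1 - lam) * d + lam := by
    have : (1 : ℝ) ≤ d := by exact_mod_cast Nat.one_le_iff_ne_zero.2 hd
    nlinarith
  have hs : ∀ A : Matrix (Fin d) (Fin d) ℂ, A.PosSemidef → 0 ≤ A.trace.re / d := fun A hA =>
    div_nonneg (Complex.nonneg_iff.1 hA.trace_nonneg).1 d.cast_nonneg
  have hrow := row_sum_le_of_generates hd hlam1.le hσ hσ1 (hE.1 x) hF.2 hgen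
  have hcol := col_sum_le_of_generates hd hlam1.le hσ hσ1 (hF.1 y) hE.2 hgen
  rw [one_div, inv_mul_le_iff₀ (sub_pos.2 hlam1), sub_le_iff_le_add]
  -- `hscale` also covers a zero trace, where the division returns `0`.
  exact max_le (div_le_of_le_mul₀ (hs _ (hE.1 x)) hscale hrow)
    (div_le_of_le_mul₀ (hs _ (hF.1 y)) hscale hcol)

/-- a lower bound on the local dimension d of any noisy quantum protocol
generating P, in terms of the marginal sums of P and the normalized traces
s_x = tr(E_x)/d, t_y = tr(F_y)/d of the POVM elements. -/
theorem dimension_lower_bound_of_generates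
    {n d : ℕ} (P : Matrix (Fin n) (Fin n) ℝ)
    (hpos : ∀ x y, 0 < P x y) (hsum : ∑ x, ∑ y, P x y = 1)
    (lam : ℝ) (hlam0 : 0 ≤ lam) (hlam1 : lam < 1)
    (σ : Matrix (Fin d × Fin d) (Fin d × Fin d) ℂ)
    (E F : Fin n → Matrix (Fin d) (Fin d) ℂ)
    (hσ : σ.PosSemidef) (hσ1 : σ.trace = 1) (hE : IsPOVM E) (hF : IsPOVM F)
    (hgen : ∀ x y, (P x y : ℂ) =
      ((noisyEffect lam (E x) ⊗ₖ noisyEffect lam (F y)) * σ).trace) :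
    ∀ x y : Fin n,
      (1 / (1 - lam)) *
        (max ((∑ b, P x b) / ((E x).trace.re / d))
             ((∑ a, P a y) / ((F y).trace.re / d)) - lam) ≤ (d : ℝ) :=
  dimension_lower_bound_of_generates_general P lam hlam1 σ E F hσ hσ1 hE hF hgen

end
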